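/- Consider the gradient-tracking recursion $V_{k+1} = (V_k + D_{k+1} - D_k)W$ with $W$ satisfying $\|(W - I_d)W^k\| \le 2\alpha^k$ for some $\alpha \in (0,1)$ and all $k \ge 0$. Then $V_{k+1} = D_{k+1}W + \sum_{i=1}^{k} D_i (W - I_d) W^{k+1-i} - D_0 W^{k+1} + V_0 W^{k+1}$, and consequently if $\sup_k\|D_k\| \le M_D$ and $\|W\| \le 1$, then $\sup_k \|V_k\| \le \|V_0\| + (2 + \frac{2}{1-\alpha}) M_D$. -/

import Mathlib

/-!
Unrolling `V (k + 1) = (V k + D (k + 1) - D k) * W` gives the closed form by induction. In it,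
every term except the sum is a matrix times a power of `W`, so its Frobenius norm is at most that
of the matrix, because `‖A * M‖_F ≤ ‖A‖_F * ‖M‖₂` row by row. The decay
`‖(W - 1) * W ^ j‖₂ ≤ 2 α ^ j` bounds the sum by the geometric series `2 M_D / (1 - α)`.
-/

/-- The Frobenius norm of a real matrix. -/
noncomputable def frobNorm {m d : ℕ} (A : Matrix (Fin m) (Fin d) ℝ) : ℝ :=
  Real.sqrt (∑ i, ∑ j, (A i j) ^ 2)

/-- The spectral norm (ℓ² operator norm) of a real square matrix. -/
noncomputable def specNorm {d : ℕ} (M : Matrix (Fin d) (Fin d) ℝ) : ℝ :=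
  ‖Matrix.toEuclideanCLM (𝕜 := ℝ) M‖

open Finset Matrix

theorem gradient_tracking_closed_form {m n R : Type*} [Fintype n] [DecidableEq n] [Ring R]
    {W : Matrix n n R} {V D : ℕ → Matrix m n R}
    (hrec : ∀ k, V (k + 1) = (V k + D (k + 1) - D k) * W) (k : ℕ) :
    V (k + 1) = D (k + 1) * W + (∑ i ∈ Icc 1 k, D i * ((W - 1) * W ^ (k + 1 - i)))
      - D 0 * W ^ (k + 1) + V 0 * W ^ (k + 1) := by
  induction k with
  | zero =>
    simp only [hrec 0, zero_add, Icc_eq_empty_of_lt one_pos, sum_empty, pow_one, Matrix.add_mul,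
      Matrix.sub_mul]
    abel
  | succ k ih =>
    have hsum : ∑ i ∈ Icc 1 (k + 1), D i * ((W - 1) * W ^ (k + 1 + 1 - i))
        = (∑ i ∈ Icc 1 k, D i * ((W - 1) * W ^ (k + 1 - i))) * W + D (k + 1) * ((W - 1) * W) := by
      rw [sum_Icc_succ_top (by omega), Nat.add_sub_cancel_left, pow_one, Matrix.sum_mul]
      congr 1
      refine sum_congr rfl fun i hi => ?_
      rw [Nat.sub_add_comm ((mem_Icc.1 hi).2.trans k.le_succ), pow_succ, Matrix.mul_assoc,
        Matrix.mul_assoc]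
    rw [hrec (k + 1), ih, hsum]
    simp only [Matrix.add_mul, Matrix.sub_mul, Matrix.mul_sub, Matrix.one_mul, pow_succ,
      Matrix.mul_assoc]
    abel

theorem sum_pow_le_of_injOn {ι : Type*} {s : Finset ι} {f : ι → ℕ} (hf : Set.InjOn f s)
    {α : ℝ} (hα0 : 0 ≤ α) (hα1 : α < 1) : ∑ i ∈ s, α ^ f i ≤ (1 - α)⁻¹ := by
  rw [← sum_image hf, ← tsum_geometric_of_lt_one hα0 hα1]
  exact (summable_geometric_of_lt_one hα0 hα1).sum_le_tsum _ fun j _ => pow_nonneg hα0 j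

theorem PiLp.norm_le_mul_norm_of_forall_le {ι : Type*} [Fintype ι] {E F : ι → Type*}
    [∀ i, SeminormedAddCommGroup (E i)] [∀ i, SeminormedAddCommGroup (F i)]
    {x : PiLp 2 E} {y : PiLp 2 F} {c : ℝ} (hc : 0 ≤ c) (h : ∀ i, ‖y i‖ ≤ c * ‖x i‖) :
    ‖y‖ ≤ c * ‖x‖ := by
  refine (sq_le_sq₀ (norm_nonneg _) (by positivity)).1 ?_
  rw [mul_pow, PiLp.norm_sq_eq_of_L2, PiLp.norm_sq_eq_of_L2, mul_sum]
  gcongr with i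
  rw [← mul_pow]
  exact pow_le_pow_left₀ (norm_nonneg _) (h i) 2

theorem specNorm_transpose {d : ℕ} (M : Matrix (Fin d) (Fin d) ℝ) : specNorm Mᵀ = specNorm M :=
  Matrix.l2_opNorm_conjTranspose M

theorem specNorm_pow_le_one {d : ℕ} {W : Matrix (Fin d) (Fin d) ℝ} (hW : specNorm W ≤ 1) :
    ∀ k, specNorm (W ^ k) ≤ 1
  | 0 => by rw [pow_zero, specNorm, map_one]; exact ContinuousLinearMap.norm_id_le
  | k + 1 => by
    rw [specNorm, map_pow]
    exact (norm_pow_le' _ k.succ_pos).trans (pow_le_one₀ (norm_nonneg _) hW)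

section Frobenius

attribute [local instance] Matrix.frobeniusNormedAddCommGroup

theorem frobNorm_eq_norm {m d : ℕ} (A : Matrix (Fin m) (Fin d) ℝ) : frobNorm A = ‖A‖ := by
  simp [frobNorm, Matrix.frobenius_norm_def, Real.sqrt_eq_rpow]

theorem toLp_mul_apply_eq_toEuclideanCLM_transpose {m d : ℕ} (A : Matrix (Fin m) (Fin d) ℝ)
    (M : Matrix (Fin d) (Fin d) ℝ) (i : Fin m) :
    WithLp.toLp 2 ((A * M) i) = Matrix.toEuclideanCLM (𝕜 := ℝ) Mᵀ (WithLp.toLp 2 (A i)) := by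
  rw [Matrix.toEuclideanCLM_toLp, Matrix.mulVec_transpose]
  rfl

theorem norm_mul_le_norm_mul_specNorm {m d : ℕ} (A : Matrix (Fin m) (Fin d) ℝ)
    (M : Matrix (Fin d) (Fin d) ℝ) : ‖A * M‖ ≤ ‖A‖ * specNorm M := by
  rw [mul_comm]
  refine PiLp.norm_le_mul_norm_of_forall_le (E := fun _ : Fin m => EuclideanSpace ℝ (Fin d))
    (x := WithLp.toLp 2 fun i => WithLp.toLp 2 (A i))
    (y := WithLp.toLp 2 fun i => WithLp.toLp 2 ((A * M) i)) (norm_nonneg _) fun i => ?_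
  rw [PiLp.toLp_apply, PiLp.toLp_apply, toLp_mul_apply_eq_toEuclideanCLM_transpose,
    ← specNorm_transpose]
  exact ContinuousLinearMap.le_opNorm _ _

theorem norm_mul_le_of_specNorm_le_one {m d : ℕ} (A : Matrix (Fin m) (Fin d) ℝ)
    {M : Matrix (Fin d) (Fin d) ℝ} (hM : specNorm M ≤ 1) : ‖A * M‖ ≤ ‖A‖ :=
  (norm_mul_le_norm_mul_specNorm A M).trans (mul_le_of_le_one_right (norm_nonneg _) hM)

theorem norm_sum_mul_le_of_geometric {m d : ℕ} {ι : Type*} {s : Finset ι} {f : ι → ℕ}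
    (hf : Set.InjOn f s) {α C M : ℝ} (hα0 : 0 ≤ α) (hα1 : α < 1)
    (D : ι → Matrix (Fin m) (Fin d) ℝ) (E : ℕ → Matrix (Fin d) (Fin d) ℝ)
    (hD : ∀ i ∈ s, ‖D i‖ ≤ M) (hM : 0 ≤ M) (hE : ∀ j, specNorm (E j) ≤ C * α ^ j) :
    ‖∑ i ∈ s, D i * E (f i)‖ ≤ C * M / (1 - α) := by
  have hC : 0 ≤ C := by simpa using (norm_nonneg _).trans (hE 0)
  calc ‖∑ i ∈ s, D i * E (f i)‖
      ≤ ∑ i ∈ s, ‖D i‖ * specNorm (E (f i)) :=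
        (norm_sum_le _ _).trans (sum_le_sum fun i _ => norm_mul_le_norm_mul_specNorm _ _)
    _ ≤ ∑ i ∈ s, M * (C * α ^ f i) :=
        sum_le_sum fun i hi => mul_le_mul (hD i hi) (hE _) (norm_nonneg _) hM
    _ = C * M * ∑ i ∈ s, α ^ f i := by rw [mul_sum]; exact sum_congr rfl fun i _ => by ring
    _ ≤ C * M * (1 - α)⁻¹ := by gcongr; exact sum_pow_le_of_injOn hf hα0 hα1
    _ = C * M / (1 - α) := rfl

theorem norm_gradient_tracking_le {m d : ℕ} {W : Matrix (Fin d) (Fin d) ℝ} {α M : ℝ}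
    (hα0 : 0 ≤ α) (hα1 : α < 1) (hWk : ∀ k : ℕ, specNorm ((W - 1) * W ^ k) ≤ 2 * α ^ k)
    (hW : specNorm W ≤ 1) {V D : ℕ → Matrix (Fin m) (Fin d) ℝ}
    (hrec : ∀ k, V (k + 1) = (V k + D (k + 1) - D k) * W) (hD : ∀ k, ‖D k‖ ≤ M) :
    ∀ k, ‖V k‖ ≤ ‖V 0‖ + (2 + 2 / (1 - α)) * M := by
  have hM : 0 ≤ M := (norm_nonneg _).trans (hD 0)
  have hα : 0 < 1 - α := sub_pos.2 hα1
  rintro (_ | k)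
  · have : 0 ≤ (2 + 2 / (1 - α)) * M := by positivity
    linarith
  rw [gradient_tracking_closed_form hrec k]
  set S := ∑ i ∈ Icc 1 k, D i * ((W - 1) * W ^ (k + 1 - i))
  have hS : ‖S‖ ≤ 2 * M / (1 - α) :=
    norm_sum_mul_le_of_geometric (f := fun i => k + 1 - i)
      (fun i hi j hj h => by simp only [coe_Icc, Set.mem_Icc] at hi hj h; omega) hα0 hα1
      D (fun j => (W - 1) * W ^ j) (fun i _ => hD i) hM hWk
  have hDW := (norm_mul_le_of_specNorm_le_one (D (k + 1)) hW).trans (hD _)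
  have hD0 :=
    (norm_mul_le_of_specNorm_le_one (D 0) (specNorm_pow_le_one hW (k + 1))).trans (hD 0)
  have hV0 := norm_mul_le_of_specNorm_le_one (V 0) (specNorm_pow_le_one hW (k + 1))
  calc _ ≤ ‖D (k + 1) * W + S‖ + ‖D 0 * W ^ (k + 1)‖ + ‖V 0 * W ^ (k + 1)‖ :=
        (norm_add_le _ _).trans (by gcongr; exact norm_sub_le _ _)
    _ ≤ ‖D (k + 1) * W‖ + ‖S‖ + ‖D 0 * W ^ (k + 1)‖ + ‖V 0 * W ^ (k + 1)‖ := by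
        gcongr; exact norm_add_le _ _
    _ ≤ M + 2 * M / (1 - α) + M + ‖V 0‖ := by gcongr
    _ = ‖V 0‖ + (2 + 2 / (1 - α)) * M := by ring

end Frobenius

theorem stmt_16_general {m d : ℕ} (W : Matrix (Fin d) (Fin d) ℝ)
    (α : ℝ) (hα : α ∈ Set.Ioo (0 : ℝ) 1)
    (hWk : ∀ k : ℕ, specNorm ((W - 1) * W ^ k) ≤ 2 * α ^ k)
    (hWnorm : specNorm W ≤ 1)
    (V D : ℕ → Matrix (Fin m) (Fin d) ℝ)
    (hrec : ∀ k, V (k + 1) = (V k + D (k + 1) - D k) * W)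
    (M_D : ℝ) (hD : ∀ k, frobNorm (D k) ≤ M_D) :
    (∀ k, V (k + 1) = D (k + 1) * W + (∑ i ∈ Finset.Icc 1 k, D i * ((W - 1) * W ^ (k + 1 - i)))
        - D 0 * W ^ (k + 1) + V 0 * W ^ (k + 1)) ∧
      ∀ k, frobNorm (V k) ≤ frobNorm (V 0) + (2 + 2 / (1 - α)) * M_D := by
  refine ⟨gradient_tracking_closed_form hrec, ?_⟩
  simp only [frobNorm_eq_norm] at hD ⊢
  exact norm_gradient_tracking_le hα.1.le hα.2 hWk hWnorm hrec hD

theorem stmt_16 {m d : ℕ} (hd : 0 < d) (W : Matrix (Fin d) (Fin d) ℝ)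
    (α : ℝ) (hα : α ∈ Set.Ioo (0 : ℝ) 1)
    (hWk : ∀ k : ℕ, specNorm ((W - 1) * W ^ k) ≤ 2 * α ^ k)
    (hWnorm : specNorm W ≤ 1)
    (V D : ℕ → Matrix (Fin m) (Fin d) ℝ)
    (hrec : ∀ k, V (k + 1) = (V k + D (k + 1) - D k) * W)
    (M_D : ℝ) (hD : ∀ k, frobNorm (D k) ≤ M_D) :
    (∀ k, V (k + 1) = D (k + 1) * W + (∑ i ∈ Finset.Icc 1 k, D i * ((W - 1) * W ^ (k + 1 - i)))
        - D 0 * W ^ (k + 1) + V 0 * W ^ (k + 1)) ∧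
      ∀ k, frobNorm (V k) ≤ frobNorm (V 0) + (2 + 2 / (1 - α)) * M_D :=
  stmt_16_general W α hα hWk hWnorm V D hrec M_D hD
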